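/- arXiv:1108.3890 — 3 statements merged into one kernel-verified Lean document; each statement's English description precedes it below -/
import Mathlib

section
/- Let T be a triangulated category and C, C′, M objects of T. If M lies in the n-th thickening thick^n_T(C) of C and C lies in the l-th thickening thick^l_T(C′) of C′, then M lies in thick^{nl}_T(C′). Equivalently, level^{C′}_T(M) ≤ level^C_T(M) · level^{C′}_T(C). -/
open CategoryTheory CategoryTheory.Limits CategoryTheory.Pretriangulated

universe v u

variable {T : Type u} [Category.{v} T] [Preadditive T] [HasZeroObject T]
  [HasShift T ℤ] [∀ n : ℤ, (CategoryTheory.shiftFunctor T n).Additive]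
  [HasBinaryBiproducts T] [Pretriangulated T]

/-- The objects of the smallest strict full subcategory containing `C` that is closed under
finite coproducts, retracts and all shifts (the first thickening `thick¹(C)`). -/
inductive thickOne (C : T) : T → Prop
  | base : thickOne C C
  | zero (X : T) : IsZero X → thickOne C X
  | shift (X : T) (n : ℤ) : thickOne C X → thickOne C (X⟦n⟧)
  | coprod (X Y : T) : thickOne C X → thickOne C Y → thickOne C (X ⊞ Y)
  | retract (X Y : T) (i : X ⟶ Y) (r : Y ⟶ X) : i ≫ r = 𝟙 X → thickOne C Y → thickOne C X
  | iso (X Y : T) (e : X ≅ Y) : thickOne C X → thickOne C Y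

/-- The objects of `addΣ(C)`: the smallest full subcategory containing `C` closed under
finite coproducts, all shifts and isomorphisms (no retracts). -/
inductive addShift (C : T) : T → Prop
  | base : addShift C C
  | zero (X : T) : IsZero X → addShift C X
  | shift (X : T) (n : ℤ) : addShift C X → addShift C (X⟦n⟧)
  | coprod (X Y : T) : addShift C X → addShift C Y → addShift C (X ⊞ Y)
  | iso (X Y : T) (e : X ≅ Y) : addShift C X → addShift C Y

/-- Closure of a class of objects under retracts (direct summands). -/
def smd (A : Set T) : Set T :=
  {X | ∃ Y ∈ A, ∃ (i : X ⟶ Y) (r : Y ⟶ X), i ≫ r = 𝟙 X}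

/-- The ∗-product: objects `L` occurring in a distinguished triangle `M → L → N → ΣM`
with `M ∈ A` and `N ∈ B`. -/
def star (A B : Set T) : Set T :=
  {L | ∃ (M N : T) (f : M ⟶ L) (g : L ⟶ N) (h : N ⟶ M⟦(1 : ℤ)⟧),
    M ∈ A ∧ N ∈ B ∧ Triangle.mk f g h ∈ distTriang T}

/-- The `n`-th thickening `thickⁿ(C)` of an object `C` in a triangulated category. -/
def thickN (C : T) : ℕ → Set T
  | 0 => {X | IsZero X}
  | 1 => {X | thickOne C X}
  | n + 2 => smd (star (thickN C (n + 1)) {X | thickOne C X})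

/-- The `C`-level of `M`: the least `n` such that `M ∈ thickⁿ(C)` (`⊤` if there is none). -/
noncomputable def level (C M : T) : ℕ∞ :=
  sInf ((fun n : ℕ => (n : ℕ∞)) '' {n : ℕ | M ∈ thickN C n})

/-! `thickⁿ⁺¹(C)` is the retract closure of the `n`-fold iterated extension product of
`thick¹(C)`. Since extension products are associative (octahedral axiom) and taking retract
closures commutes with them, an extension of an object of `thickᵃ(C)` by one of `thickᵇ(C)` lies
in `thickᵃ⁺ᵇ(C)`. If `C ∈ thickˡ(C′)`, then `thick¹(C) ⊆ thickˡ(C′)` because `thickˡ(C′)` is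
closed under shifts, finite sums and retracts (sums of distinguished triangles are
distinguished); an induction on `n` along the defining triangles of `thickⁿ(C)` then gives
`thickⁿ(C) ⊆ thickⁿˡ(C′)`. -/

namespace CategoryTheory.ObjectProperty

variable {C : Type*} [Category C] (P Q : ObjectProperty C) {J : Type*} [HasProductsOfShape J C]

instance isClosedUnderLimitsOfShape_discrete_retractClosure
    [P.IsClosedUnderLimitsOfShape (Discrete J)] :
    P.retractClosure.IsClosedUnderLimitsOfShape (Discrete J) := by
  refine IsClosedUnderLimitsOfShape.mk' ?_
  rintro _ ⟨F, hF⟩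
  choose Y hY hr using hF
  let r : Retract F (Discrete.functor fun j => Y ⟨j⟩) :=
    { i := Discrete.natTrans fun j => (hr j).some.i
      r := Discrete.natTrans fun j => (hr j).some.r }
  exact ⟨_, P.prop_pi _ fun j => hY ⟨j⟩, ⟨r.map lim⟩⟩

variable [Preadditive C] [HasZeroObject C] [HasShift C ℤ] [∀ n : ℤ, (shiftFunctor C n).Additive]
  [Pretriangulated C]

instance isClosedUnderLimitsOfShape_discrete_extensionProduct
    [P.IsClosedUnderLimitsOfShape (Discrete J)] [Q.IsClosedUnderLimitsOfShape (Discrete J)] :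
    (extensionProduct P Q).IsClosedUnderLimitsOfShape (Discrete J) := by
  refine IsClosedUnderLimitsOfShape.mk' ?_
  rintro _ ⟨F, hF⟩
  choose A B f g h hT hA hB using hF
  let Tr : J → Triangle C := fun j => Triangle.mk (f ⟨j⟩) (g ⟨j⟩) (h ⟨j⟩)
  refine prop_of_iso _ (HasLimit.isoOfNatIso Discrete.natIsoFunctor.symm)
    ⟨_, _, _, _, _, productTriangle_distinguished Tr fun j => hT ⟨j⟩,
      P.prop_pi _ fun j => hA ⟨j⟩, Q.prop_pi _ fun j => hB ⟨j⟩⟩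

instance isClosedUnderLimitsOfShape_discrete_extensionProductIter
    [P.IsClosedUnderLimitsOfShape (Discrete J)] (n : ℕ) :
    (P.extensionProductIter n).IsClosedUnderLimitsOfShape (Discrete J) := by
  induction n with
  | zero => assumption
  | succ n ih => rw [extensionProductIter_succ]; infer_instance

end CategoryTheory.ObjectProperty

open ObjectProperty

section

variable {D : Type*} [Category D]

lemma smd_setOf (P : ObjectProperty D) : smd {X | P X} = {X | P.retractClosure X} := by
  ext X
  exact ⟨fun ⟨Y, hY, i, r, h⟩ => ⟨Y, hY, ⟨i, r, h⟩⟩,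
    fun ⟨Y, hY, ⟨r⟩⟩ => ⟨Y, hY, r.i, r.r, r.retract⟩⟩

lemma star_setOf [Preadditive D] [HasZeroObject D] [HasShift D ℤ]
    [∀ n : ℤ, (shiftFunctor D n).Additive] [Pretriangulated D] (P Q : ObjectProperty D) :
    star {X | P X} {X | Q X} = {X | extensionProduct P Q X} := by
  ext X
  exact ⟨fun ⟨A, B, f, g, h, hA, hB, hT⟩ => ⟨A, B, f, g, h, hT, hA, hB⟩,
    fun ⟨A, B, f, g, h, hT, hA, hB⟩ => ⟨A, B, f, g, h, hA, hB, hT⟩⟩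

variable [Preadditive D] [HasShift D ℤ] [HasBinaryBiproducts D] (C : D)

instance nonempty_thickOne : ObjectProperty.Nonempty (thickOne C) := ⟨C, .base⟩

instance isStableUnderRetracts_thickOne : IsStableUnderRetracts (thickOne C) :=
  ⟨fun r hY => .retract _ _ r.i r.r r.retract hY⟩

instance isStableUnderShift_thickOne : IsStableUnderShift (thickOne C) ℤ where
  isStableUnderShiftBy n := ⟨fun X hX => .shift X n hX⟩

instance isClosedUnderBinaryProducts_thickOne : IsClosedUnderBinaryProducts (thickOne C) := by
  refine IsClosedUnderLimitsOfShape.mk' ?_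
  rintro _ ⟨F, hF⟩
  exact .iso _ _ (HasLimit.isoOfNatIso (diagramIsoPair F) ≪≫ (biprod.isoProd _ _).symm).symm
    (.coprod _ _ (hF _) (hF _))

end

lemma thickN_succ [IsTriangulated T] (C : T) (n : ℕ) :
    thickN C (n + 1) = {X | (extensionProductIter (thickOne C) n).retractClosure X} := by
  induction n with
  | zero => rw [extensionProductIter_zero, retractClosure_eq_self]; rfl
  | succ n ih =>
    rw [thickN, ih, star_setOf, smd_setOf, extensionProductIter_succ',
      ← retractClosure_extensionProduct_retractClosure_retractClosure (extensionProductIter _ n),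
      retractClosure_eq_self (thickOne C)]

lemma mem_thickN_succ [IsTriangulated T] {C X : T} {n : ℕ} :
    X ∈ thickN C (n + 1) ↔ (extensionProductIter (thickOne C) n).retractClosure X := by
  rw [thickN_succ]; rfl

section thickN

variable [IsTriangulated T] {C : T} {l : ℕ}

lemma mem_thickN_of_isZero {X : T} (hX : IsZero X) : X ∈ thickN C l := by
  cases l with
  | zero => exact hX
  | succ l => rw [mem_thickN_succ]; exact prop_of_isZero _ hX

lemma mem_thickN_of_retract {X Y : T} (r : Retract X Y) (hY : Y ∈ thickN C l) : X ∈ thickN C l := by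
  cases l with
  | zero => exact IsZero.of_mono r.i hY
  | succ l => rw [mem_thickN_succ] at hY ⊢; exact prop_of_retract _ r hY

lemma shift_mem_thickN {X : T} (n : ℤ) (hX : X ∈ thickN C l) : X⟦n⟧ ∈ thickN C l := by
  cases l with
  | zero => exact (shiftFunctor T n).map_isZero hX
  | succ l => rw [mem_thickN_succ] at hX ⊢; exact le_shift _ n X hX

lemma biprod_mem_thickN {X Y : T} (hX : X ∈ thickN C l) (hY : Y ∈ thickN C l) :
    (X ⊞ Y) ∈ thickN C l := by
  cases l with
  | zero => exact (biprod_isZero_iff _ _).2 ⟨hX, hY⟩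
  | succ l =>
    rw [mem_thickN_succ] at hX hY ⊢
    exact prop_of_isLimit_binaryFan _ (BinaryBiproduct.isLimit X Y) hX hY

lemma mem_thickN_of_thickOne {C' : T} (hC : C ∈ thickN C' l) {X : T} (hX : thickOne C X) :
    X ∈ thickN C' l := by
  induction hX with
  | base => exact hC
  | zero X hX => exact mem_thickN_of_isZero hX
  | shift X n _ ih => exact shift_mem_thickN n ih
  | coprod X Y _ _ ihX ihY => exact biprod_mem_thickN ihX ihY
  | retract X Y i r hir _ ih => exact mem_thickN_of_retract ⟨i, r, hir⟩ ih
  | iso X Y e _ ih => exact mem_thickN_of_retract e.symm.retract ih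

lemma mem_thickN_add_of_distTriang {X L Y : T} {f : X ⟶ L} {g : L ⟶ Y} {h : Y ⟶ X⟦(1 : ℤ)⟧}
    (hT : Triangle.mk f g h ∈ distTriang T) {a b : ℕ} (hX : X ∈ thickN C a)
    (hY : Y ∈ thickN C b) : L ∈ thickN C (a + b) := by
  rcases b with _ | b
  · have : IsIso f := (Triangle.isZero₃_iff_isIso₁ _ hT).1 hY
    exact mem_thickN_of_retract (asIso f).symm.retract hX
  rcases a with _ | a
  · have : IsIso g := (Triangle.isZero₁_iff_isIso₂ _ hT).1 hX
    rw [zero_add]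
    exact mem_thickN_of_retract (asIso g).retract hY
  rw [mem_thickN_succ] at hX hY
  rw [show a + 1 + (b + 1) = a + (b + 1) + 1 by omega, mem_thickN_succ,
    extensionProductIter_add' _ rfl,
    ← retractClosure_extensionProduct_retractClosure_retractClosure]
  exact le_retractClosure _ _ ⟨_, _, _, _, _, hT, hX, hY⟩

end thickN

lemma mem_thickN_mul [IsTriangulated T] {C C' : T} {l : ℕ} (hC : C ∈ thickN C' l) :
    ∀ {n : ℕ} {M : T}, M ∈ thickN C n → M ∈ thickN C' (n * l)
  | 0, _, hM => mem_thickN_of_isZero hM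
  | 1, _, hM => by rw [one_mul]; exact mem_thickN_of_thickOne hC hM
  | n + 2, _, ⟨_, ⟨_, _, _, _, _, hM₁, hM₂, hT⟩, i, r, hir⟩ => by
    rw [show (n + 2) * l = (n + 1) * l + l by ring]
    exact mem_thickN_of_retract ⟨i, r, hir⟩
      (mem_thickN_add_of_distTriang hT (mem_thickN_mul hC hM₁) (mem_thickN_of_thickOne hC hM₂))

lemma level_eq_sInf {C M : T} (h : {n | M ∈ thickN C n}.Nonempty) :
    level C M = (sInf {n | M ∈ thickN C n} : ℕ) := by
  rw [level, sInf_image, ENat.natCast_sInf h]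

/-- **Triangular inequality for levels** (Lemma 3.1 / cf. [S, 6.3.2(3)]):
if `M ∈ thickⁿ(C)` and `C ∈ thickˡ(C′)` then `M ∈ thickⁿˡ(C′)`; equivalently
`level^{C′}(M) ≤ level^{C}(M) · level^{C′}(C)`. -/
theorem level_triangular_inequality [IsTriangulated T] (C C' M : T) (n l : ℕ)
    (hM : M ∈ thickN C n) (hC : C ∈ thickN C' l) :
    M ∈ thickN C' (n * l) ∧ level C' M ≤ level C M * level C' C := by
  refine ⟨mem_thickN_mul hC hM, ?_⟩
  have hM₀ := Nat.sInf_mem (s := {k | M ∈ thickN C k}) ⟨n, hM⟩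
  have hC₀ := Nat.sInf_mem (s := {k | C ∈ thickN C' k}) ⟨l, hC⟩
  rw [level_eq_sInf ⟨n, hM⟩, level_eq_sInf ⟨l, hC⟩, level_eq_sInf ⟨_, mem_thickN_mul hC₀ hM₀⟩]
  exact_mod_cast Nat.sInf_le (mem_thickN_mul hC₀ hM₀)
end

section
/- In a triangulated category T, thick^n_T(C) = smd(addΣ(C)^{∗n}), i.e. the n-th thickening of C equals the closure under retracts of the n-fold ∗-product of the additive-shift closure of C. -/
open CategoryTheory CategoryTheory.Limits CategoryTheory.Pretriangulated

universe v u

variable {T : Type u} [Category.{v} T] [Preadditive T] [HasZeroObject T]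
  [HasShift T ℤ] [∀ n : ℤ, (CategoryTheory.shiftFunctor T n).Additive]
  [HasBinaryBiproducts T] [Pretriangulated T]

/-- The `n`-fold ∗-power `A^{∗n}` of a class of objects, with the conventions
`A^{∗0} = {0}` and `A^{∗1} = A`, and `A^{∗(n+1)} = A^{∗n} ∗ A`. -/
def starPow (A : Set T) : ℕ → Set T
  | 0 => {X | IsZero X}
  | 1 => A
  | n + 2 => star (starPow A (n + 1)) A

/-!
Both sides are built from `C` by the same operations, except that `thickⁿ` takes retracts at every
stage while `smd(addΣ(C)^{∗n})` takes them only once, at the end. So the theorem amounts to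
`smd (smd A ∗ smd B) = smd (A ∗ B)`. If `M'` is a retract of `M ≅ M' ⊞ K` and `N'` a retract of
`N ≅ N' ⊞ Q`, adding the split triangle `K → K ⊞ Q → Q → 0` to a triangle `M' → L → N' → M'⟦1⟧`
gives a triangle `M → L ⊞ (K ⊞ Q) → N → M⟦1⟧`, whose middle term has `L` as a retract.
-/

section Retracts

variable {D : Type*} [Category D]

lemma subset_smd (A : Set D) : A ⊆ smd A :=
  fun X hX => ⟨X, hX, 𝟙 X, 𝟙 X, Category.id_comp _⟩

lemma smd_mono {A B : Set D} (h : A ⊆ B) : smd A ⊆ smd B := by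
  rintro X ⟨Y, hY, i, r, hir⟩
  exact ⟨Y, h hY, i, r, hir⟩

lemma smd_smd_subset (A : Set D) : smd (smd A) ⊆ smd A := by
  rintro X ⟨Y, ⟨Z, hZ, i', r', hir'⟩, i, r, hir⟩
  exact ⟨Z, hZ, i ≫ i', r' ≫ r, by rw [Category.assoc, reassoc_of% hir', hir]⟩

lemma smd_setOf_isZero [HasZeroMorphisms D] : smd {X : D | IsZero X} = {X : D | IsZero X} := by
  refine Set.Subset.antisymm ?_ (subset_smd _)
  rintro X ⟨Y, hY, i, r, hir⟩
  rw [Set.mem_ofPred_eq, IsZero.iff_id_eq_zero, ← hir, hY.eq_of_src r 0, comp_zero]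

end Retracts

section Triangles

variable {D : Type*} [Category D] [Preadditive D] [HasZeroObject D] [HasShift D ℤ]
  [∀ n : ℤ, (shiftFunctor D n).Additive] [Pretriangulated D]

lemma exists_iso_biprod_of_retract {X Y : D} (i : X ⟶ Y) (r : Y ⟶ X) (hir : i ≫ r = 𝟙 X) :
    ∃ K : D, Nonempty (Y ≅ X ⊞ K) := by
  obtain ⟨K, p, w, hT⟩ := distinguished_cocone_triangle i
  have hwi : w ≫ i⟦(1 : ℤ)⟧' = 0 := comp_distTriang_mor_zero₃₁ _ hT
  have hw : w = 0 := calc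
    w = w ≫ (i ≫ r)⟦(1 : ℤ)⟧' := by rw [hir, CategoryTheory.Functor.map_id, Category.comp_id]
    _ = (w ≫ i⟦(1 : ℤ)⟧') ≫ r⟦(1 : ℤ)⟧' := by rw [Functor.map_comp, Category.assoc]
    _ = 0 := by rw [hwi, zero_comp]
  obtain ⟨e, -⟩ := exists_iso_binaryBiproduct_of_distTriang _ hT hw
  exact ⟨K, ⟨e⟩⟩

lemma exists_distTriang_of_iso {S : Triangle D} (hS : S ∈ distTriang D) {X₁ X₂ X₃ : D}
    (e₁ : X₁ ≅ S.obj₁) (e₂ : X₂ ≅ S.obj₂) (e₃ : X₃ ≅ S.obj₃) :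
    ∃ (f : X₁ ⟶ X₂) (g : X₂ ⟶ X₃) (h : X₃ ⟶ X₁⟦(1 : ℤ)⟧), Triangle.mk f g h ∈ distTriang D := by
  refine ⟨e₁.hom ≫ S.mor₁ ≫ e₂.inv, e₂.hom ≫ S.mor₂ ≫ e₃.inv,
    e₃.hom ≫ S.mor₃ ≫ e₁.inv⟦(1 : ℤ)⟧', isomorphic_distinguished _ hS _ ?_⟩
  refine Triangle.isoMk _ S e₁ e₂ e₃ ?_ ?_ ?_
  -- `simp` does not see through the projections of `Triangle.mk`
  · show (e₁.hom ≫ S.mor₁ ≫ e₂.inv) ≫ e₂.hom = e₁.hom ≫ S.mor₁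
    simp
  · show (e₂.hom ≫ S.mor₂ ≫ e₃.inv) ≫ e₃.hom = e₂.hom ≫ S.mor₂
    simp
  · show (e₃.hom ≫ S.mor₃ ≫ e₁.inv⟦(1 : ℤ)⟧') ≫ e₁.hom⟦(1 : ℤ)⟧' = e₃.hom ≫ S.mor₃
    simp [← Functor.map_comp]

noncomputable def piBoolIsoBiprod (X : Bool → D) : ∏ᶜ X ≅ X true ⊞ X false where
  hom := biprod.lift (Pi.π X true) (Pi.π X false)
  inv := Pi.lift fun b => Bool.rec biprod.snd biprod.fst b
  hom_inv_id := by
    ext (_ | _) <;> simp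
  inv_hom_id := by
    ext <;> simp

lemma exists_distTriang_biprod {S₁ S₂ : Triangle D} (h₁ : S₁ ∈ distTriang D)
    (h₂ : S₂ ∈ distTriang D) :
    ∃ (f : S₁.obj₁ ⊞ S₂.obj₁ ⟶ S₁.obj₂ ⊞ S₂.obj₂) (g : S₁.obj₂ ⊞ S₂.obj₂ ⟶ S₁.obj₃ ⊞ S₂.obj₃)
      (h : S₁.obj₃ ⊞ S₂.obj₃ ⟶ (S₁.obj₁ ⊞ S₂.obj₁)⟦(1 : ℤ)⟧),
      Triangle.mk f g h ∈ distTriang D := by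
  let S : Bool → Triangle D := fun b => cond b S₁ S₂
  have hS : ∀ b, S b ∈ distTriang D := by rintro (_ | _) <;> assumption
  exact exists_distTriang_of_iso (productTriangle_distinguished S hS)
    (piBoolIsoBiprod fun b => (S b).obj₁).symm (piBoolIsoBiprod fun b => (S b).obj₂).symm
    (piBoolIsoBiprod fun b => (S b).obj₃).symm

lemma star_mono {A A' B B' : Set D} (hA : A ⊆ A') (hB : B ⊆ B') : star A B ⊆ star A' B' := by
  rintro L ⟨M, N, f, g, h, hM, hN, hT⟩
  exact ⟨M, N, f, g, h, hA hM, hB hN, hT⟩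

lemma star_smd_smd_subset (A B : Set D) : star (smd A) (smd B) ⊆ smd (star A B) := by
  rintro L ⟨M', N', f, g, h, ⟨M, hM, iM, rM, hirM⟩, ⟨N, hN, iN, rN, hirN⟩, hT⟩
  obtain ⟨K, ⟨eM⟩⟩ := exists_iso_biprod_of_retract iM rM hirM
  obtain ⟨Q, ⟨eN⟩⟩ := exists_iso_biprod_of_retract iN rN hirN
  obtain ⟨f', g', h', hT'⟩ :=
    exists_distTriang_biprod hT (binaryBiproductTriangle_distinguished K Q)
  obtain ⟨f'', g'', h'', hT''⟩ := exists_distTriang_of_iso hT' eM (Iso.refl _) eN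
  exact ⟨_, ⟨M, N, f'', g'', h'', hM, hN, hT''⟩, biprod.inl, biprod.fst, biprod.inl_fst⟩

lemma smd_star_smd_smd (A B : Set D) : smd (star (smd A) (smd B)) = smd (star A B) :=
  Set.Subset.antisymm ((smd_mono (star_smd_smd_subset A B)).trans (smd_smd_subset _))
    (smd_mono (star_mono (subset_smd A) (subset_smd B)))

end Triangles

section AddShift

variable {D : Type*} [Category D] [Preadditive D] [HasShift D ℤ] [HasBinaryBiproducts D]

lemma addShift.thickOne {C X : D} (h : addShift C X) : thickOne C X := by
  induction h with
  | base => exact .base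
  | zero X hX => exact .zero X hX
  | shift X n _ ih => exact .shift X n ih
  | coprod X Y _ _ ihX ihY => exact .coprod X Y ihX ihY
  | iso X Y e _ ih => exact .iso X Y e ih

lemma thickOne.mem_smd_addShift {C X : D} (h : thickOne C X) : X ∈ smd {Y | addShift C Y} := by
  induction h with
  | base => exact subset_smd _ addShift.base
  | zero X hX => exact subset_smd _ (addShift.zero X hX)
  | shift X n _ ih =>
    obtain ⟨Y, hY, i, r, hir⟩ := ih
    exact ⟨Y⟦n⟧, hY.shift Y n, i⟦n⟧', r⟦n⟧',
      by rw [← Functor.map_comp, hir, CategoryTheory.Functor.map_id]⟩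
  | coprod X Y _ _ ihX ihY =>
    obtain ⟨X', hX', iX, rX, hirX⟩ := ihX
    obtain ⟨Y', hY', iY, rY, hirY⟩ := ihY
    exact ⟨X' ⊞ Y', hX'.coprod _ _ hY', biprod.map iX iY, biprod.map rX rY,
      by ext <;> simp [hirX, hirY]⟩
  | retract X Y i r hir _ ih => exact smd_smd_subset _ ⟨Y, ih, i, r, hir⟩
  | iso X Y e _ ih => exact smd_smd_subset _ ⟨X, ih, e.inv, e.hom, e.inv_hom_id⟩

lemma setOf_thickOne_eq_smd (C : D) : {X | thickOne C X} = smd {X | addShift C X} := by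
  refine Set.Subset.antisymm (fun X hX => thickOne.mem_smd_addShift hX) ?_
  rintro X ⟨Y, hY, i, r, hir⟩
  exact .retract X Y i r hir hY.thickOne

end AddShift

/-- `thickⁿ_T(C) = smd(addΣ(C)^{∗n})` (cf. [B-B], [ABIM, 2.2.1]). -/
theorem thickN_eq_smd_starPow_addShift (C : T) (n : ℕ) :
    thickN C n = smd (starPow {X | addShift C X} n) :=
  match n with
  | 0 => smd_setOf_isZero.symm
  | 1 => setOf_thickOne_eq_smd C
  | m + 2 => by
    rw [thickN, starPow, thickN_eq_smd_starPow_addShift C (m + 1), setOf_thickOne_eq_smd,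
      smd_star_smd_smd]
end

section
/- Let A be a DG algebra over a field K and M a DG A-module admitting a minimal semifree resolution F ≃ M with filtration 0 = F^{-1} ⊆ F^0 ⊆ F^1 ⊆ ⋯ where each F^l/F^{l-1} is a coproduct of shifts of A. Then dim_K H(M ⊗^L_A K) ≥ level^A_{D(A)}(M). In particular, if dim_K H(M ⊗^L_A K) is finite, then the A-level of M in D(A) is finite. -/
open CategoryTheory CategoryTheory.Limits CategoryTheory.Pretriangulated

universe v u

variable {T : Type u} [Category.{v} T] [Preadditive T] [HasZeroObject T]
  [HasShift T ℤ] [∀ n : ℤ, (CategoryTheory.shiftFunctor T n).Additive]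
  [HasBinaryBiproducts T] [Pretriangulated T]

/-!
Each triangle `F i → F (i+1) → ⨁ⱼ A⟦e i j⟧` exhibits `F (i+1)` as an extension of a member
of `thick¹(A)` by `F i`, so passing from `F i` to `F (i+1)` raises the level by at most one,
and not at all when the cone is zero. Hence `F k ∈ thick^{∑_{i<k} m i}(A)`, and when `∑ m i`
is finite, `M ≅ F n` for some `n` beyond the last nonzero `m i`.
-/

open ZeroObject

section Thickening

variable (C : T)

theorem thickN_of_iso : ∀ (n : ℕ) {X Y : T}, (X ≅ Y) → X ∈ thickN C n → Y ∈ thickN C n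
  | 0, _, _, e, hX => hX.of_iso e.symm
  | 1, X, Y, e, hX => thickOne.iso X Y e hX
  | n + 2, _, _, e, ⟨Z, hZ, i, r, hir⟩ =>
    ⟨Z, hZ, e.inv ≫ i, r ≫ e.hom, by simp [reassoc_of% hir]⟩

theorem thickN_subset_succ : ∀ n : ℕ, thickN C n ⊆ thickN C (n + 1)
  | 0 => fun X hX => thickOne.zero X hX
  | 1 => fun X hX =>
    ⟨X, ⟨X, 0, 𝟙 X, 0, 0, hX, thickOne.zero 0 (isZero_zero T), contractible_distinguished X⟩,
      𝟙 X, 𝟙 X, Category.id_comp _⟩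
  | n + 2 => fun _ ⟨Z, ⟨P, Q, f, g, h, hP, hQ, hT⟩, i, r, hir⟩ =>
    ⟨Z, ⟨P, Q, f, g, h, thickN_subset_succ (n + 1) hP, hQ, hT⟩, i, r, hir⟩

theorem thickN_mono {a b : ℕ} (hab : a ≤ b) : thickN C a ⊆ thickN C b := by
  induction hab with
  | refl => exact subset_rfl
  | step _ ih => exact ih.trans (thickN_subset_succ C _)

theorem level_le_of_mem_thickN {M : T} {n : ℕ} (hM : M ∈ thickN C n) : level C M ≤ n :=
  sInf_le ⟨n, hM, rfl⟩

theorem mem_thickN_of_distinguished_of_isZero {X Y Z : T} {n : ℕ} (f : X ⟶ Y) (g : Y ⟶ Z)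
    (h : Z ⟶ X⟦(1 : ℤ)⟧) (hT : Triangle.mk f g h ∈ distTriang T) (hZ : IsZero Z)
    (hX : X ∈ thickN C n) : Y ∈ thickN C n :=
  have : IsIso f := ((Triangle.mk f g h).isZero₃_iff_isIso₁ hT).mp hZ
  thickN_of_iso C n (asIso f) hX

theorem mem_thickN_succ_of_distinguished {X Y Z : T} {n : ℕ} (f : X ⟶ Y) (g : Y ⟶ Z)
    (h : Z ⟶ X⟦(1 : ℤ)⟧) (hT : Triangle.mk f g h ∈ distTriang T) (hZ : thickOne C Z)
    (hX : X ∈ thickN C n) : Y ∈ thickN C (n + 1) := by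
  rcases n with _ | n
  · have : IsIso g := ((Triangle.mk f g h).isZero₁_iff_isIso₂ hT).mp hX
    exact thickOne.iso _ _ (asIso g).symm hZ
  · exact ⟨Y, ⟨X, Z, f, g, h, hX, hZ, hT⟩, 𝟙 Y, 𝟙 Y, Category.id_comp _⟩

end Thickening

theorem isZero_biproduct_of_isEmpty {D : Type*} [Category D] [HasZeroMorphisms D]
    {J : Type} [IsEmpty J] (g : J → D) [HasBiproduct g] : IsZero (⨁ g) := by
  rw [IsZero.iff_id_eq_zero]
  exact biproduct.hom_ext _ _ isEmptyElim

noncomputable def biproductFinSuccIso {D : Type*} [Category D] [Preadditive D]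
    [HasFiniteBiproducts D] [HasBinaryBiproducts D] {k : ℕ} (g : Fin (k + 1) → D) :
    ⨁ g ≅ g 0 ⊞ ⨁ (fun j : Fin k => g j.succ) where
  hom := biprod.lift (biproduct.π g 0) (biproduct.lift fun j => biproduct.π g j.succ)
  inv := biprod.desc (biproduct.ι g 0) (biproduct.desc fun j => biproduct.ι g j.succ)
  hom_inv_id := by
    rw [biprod.lift_desc, biproduct.lift_desc, ← biproduct.total, Fin.sum_univ_succ]
  inv_hom_id := by
    ext <;> simp [biproduct.ι_π, Fin.succ_ne_zero, eq_comm (a := (0 : Fin (k + 1)))]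

section Biproducts

variable [HasFiniteBiproducts T]

omit [HasZeroObject T] [∀ n : ℤ, (shiftFunctor T n).Additive] [Pretriangulated T] in
theorem thickOne_biproduct (C : T) :
    ∀ (k : ℕ) (g : Fin k → T), (∀ j, thickOne C (g j)) → thickOne C (⨁ g)
  | 0, g, _ => thickOne.zero _ (isZero_biproduct_of_isEmpty g)
  | k + 1, g, hg =>
    thickOne.iso _ _ (biproductFinSuccIso g).symm
      (thickOne.coprod _ _ (hg 0) (thickOne_biproduct C k _ fun j => hg j.succ))

theorem mem_thickN_of_semifree_filtration (C : T) (F : ℕ → T) (m : ℕ → ℕ)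
    (e : ∀ i : ℕ, Fin (m i) → ℤ) (hF0 : IsZero (F 0))
    (htri : ∀ i : ℕ, ∃ (f : F i ⟶ F (i + 1))
      (g : F (i + 1) ⟶ ⨁ (fun j : Fin (m i) => C⟦e i j⟧))
      (h : (⨁ (fun j : Fin (m i) => C⟦e i j⟧)) ⟶ (F i)⟦(1 : ℤ)⟧),
      Triangle.mk f g h ∈ distTriang T) :
    ∀ k : ℕ, F k ∈ thickN C (∑ i ∈ Finset.range k, m i)
  | 0 => hF0
  | k + 1 => by
    obtain ⟨f, g, h, hT⟩ := htri k
    have ih := mem_thickN_of_semifree_filtration C F m e hF0 htri k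
    rw [Finset.sum_range_succ]
    rcases Nat.eq_zero_or_pos (m k) with hk | hk
    · have : IsEmpty (Fin (m k)) := by rw [hk]; infer_instance
      rw [hk, add_zero]
      exact mem_thickN_of_distinguished_of_isZero C f g h hT (isZero_biproduct_of_isEmpty _) ih
    · have hcone := thickOne_biproduct C _ _ fun j => thickOne.shift _ (e k j) thickOne.base
      exact thickN_mono C (by omega) (mem_thickN_succ_of_distinguished C f g h hT hcone ih)

end Biproducts

/-- `T` models `D(A)` and `A` the free module. The minimal semifree resolution of `M` is the
filtration `F`, whose `i`-th subquotient is `⨁ⱼ A⟦e i j⟧`; by minimality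
`dim_K H(M ⊗^L_A K) = ∑ᵢ m i`. -/
theorem level_le_dim_homology_tensor_residue_field_general [HasFiniteBiproducts T]
    (A M : T) (F : ℕ → T) (m : ℕ → ℕ) (e : ∀ i : ℕ, Fin (m i) → ℤ)
    (hF0 : IsZero (F 0))
    (htri : ∀ i : ℕ, ∃ (f : F i ⟶ F (i + 1))
      (g : F (i + 1) ⟶ ⨁ (fun j : Fin (m i) => A⟦e i j⟧))
      (h : (⨁ (fun j : Fin (m i) => A⟦e i j⟧)) ⟶ (F i)⟦(1 : ℤ)⟧),
      Triangle.mk f g h ∈ distTriang T)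
    (hmin : (∑' i : ℕ, (m i : ℕ∞)) < ⊤ →
      ∃ n : ℕ, (∀ i : ℕ, n ≤ i → m i = 0) ∧ Nonempty (M ≅ F n)) :
    level A M ≤ ∑' i : ℕ, (m i : ℕ∞) := by
  rcases eq_top_or_lt_top (∑' i : ℕ, (m i : ℕ∞)) with htop | hfin
  · exact htop ▸ le_top
  obtain ⟨n, hm, ⟨eMF⟩⟩ := hmin hfin
  have hM : M ∈ thickN A (∑ i ∈ Finset.range n, m i) :=
    thickN_of_iso A _ eMF.symm (mem_thickN_of_semifree_filtration A F m e hF0 htri n)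
  calc level A M ≤ ((∑ i ∈ Finset.range n, m i : ℕ) : ℕ∞) := level_le_of_mem_thickN A hM
    _ = ∑' i : ℕ, (m i : ℕ∞) := by
      rw [Nat.cast_sum, tsum_eq_sum (s := Finset.range n) fun i hi => by
        simp [hm i (by simpa using hi)]]

/-- (Abstract form of) Lemma 2.6: `dim_K H(M ⊗^L_A K) ≥ level^A_{D(A)}(M)` for a DG module `M`
admitting a minimal semifree resolution.  The triangulated category `T` models `D(A)`, the
object `A` the free module, and the minimal semifree resolution of `M` is given by a
filtration `F 0 = 0 ⊆ F 1 ⊆ ⋯` whose `i`-th subquotient is a coproduct of `m i` shifts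
`A⟦e i j⟧` of `A`; by minimality, `dim_K H(M ⊗^L_A K) = ∑ᵢ m i` (as a value in `ℕ∞`), and
if this is finite the resolution stops at a finite stage and is quasi-isomorphic to `M`.
Conclusion: `level^A_{D(A)}(M) ≤ dim_K H(M ⊗^L_A K) = ∑ᵢ m i`; in particular if
`dim_K H(M ⊗^L_A K)` is finite then so is the `A`-level of `M`. -/
theorem level_le_dim_homology_tensor_residue_field [IsTriangulated T] [HasFiniteBiproducts T]
    (A M : T) (F : ℕ → T) (m : ℕ → ℕ) (e : ∀ i : ℕ, Fin (m i) → ℤ)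
    (hF0 : IsZero (F 0))
    (htri : ∀ i : ℕ, ∃ (f : F i ⟶ F (i + 1))
      (g : F (i + 1) ⟶ ⨁ (fun j : Fin (m i) => A⟦e i j⟧))
      (h : (⨁ (fun j : Fin (m i) => A⟦e i j⟧)) ⟶ (F i)⟦(1 : ℤ)⟧),
      Triangle.mk f g h ∈ distTriang T)
    (hmin : (∑' i : ℕ, (m i : ℕ∞)) < ⊤ →
      ∃ n : ℕ, (∀ i : ℕ, n ≤ i → m i = 0) ∧ Nonempty (M ≅ F n)) :
    level A M ≤ ∑' i : ℕ, (m i : ℕ∞) :=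
  level_le_dim_homology_tensor_residue_field_general A M F m e hF0 htri hmin
end
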